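/- arXiv:1708.03237 — 2 statements merged into one kernel-verified Lean document; each statement's English description precedes it below -/
import Mathlib

section
/- Let G be a finite graph with e non-loop edges and p ∈ [0,1]. Keep each vertex independently with probability p, and call a non-loop edge of G isolated if both its endpoints are kept and each endpoint has exactly one kept neighbor (via non-loop edges). Let e^I be the number of isolated edges. Then E[(e^I)²] ≤ e²·p⁴ + e·p²; in particular, with p = r/√(2e) ≤ 1 this gives E[(e^I)²] ≤ r⁴/4 + r²/2, a bound independent of G. -/
open Filter Finset
open scoped Classical ENNReal

/-- A finite graph on vertex set `Fin n`, possibly with loops, without multiple edges. -/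
structure FinGraph where
  n : ℕ
  adj : Fin n → Fin n → Bool
  symm : ∀ i j, adj i j = adj j i

namespace FinGraph

/-- Number of vertices. -/
def v (G : FinGraph) : ℕ := G.n

/-- Number of non-loop edges. -/
def e (G : FinGraph) : ℕ :=
  ((univ : Finset (Fin G.n × Fin G.n)).filter
    (fun q => G.adj q.1 q.2 = true ∧ q.1 < q.2)).card

/-- Number of loops. -/
def loops (G : FinGraph) : ℕ :=
  ((univ : Finset (Fin G.n)).filter (fun i => G.adj i i = true)).card

/-- Degree of a vertex (number of neighbours via non-loop edges). -/
def deg (G : FinGraph) (i : Fin G.n) : ℕ :=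
  ((univ : Finset (Fin G.n)).filter (fun j => G.adj i j = true ∧ j ≠ i)).card

/-- A graph is loopless when no vertex is adjacent to itself. -/
def Loopless (G : FinGraph) : Prop := ∀ i, G.adj i i = false

/-- The induced subgraph on a set `S` of vertices. -/
def induce (G : FinGraph) (S : Finset (Fin G.n)) : FinGraph where
  n := S.card
  adj i j := G.adj (S.orderIsoOfFin rfl i).1 (S.orderIsoOfFin rfl j).1
  symm i j := G.symm _ _

/-- The graph obtained by discarding all isolated vertices (vertices in no edge,
loop or non-loop). -/
def core (G : FinGraph) : FinGraph :=
  G.induce ((univ : Finset (Fin G.n)).filter (fun i => ∃ j, G.adj i j = true))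

/-- Graph isomorphism. -/
def Iso (G H : FinGraph) : Prop :=
  ∃ eqv : Fin G.n ≃ Fin H.n, ∀ i j, G.adj i j = H.adj (eqv i) (eqv j)

/-- Average degree `d̄(G)`. -/
noncomputable def avgDeg (G : FinGraph) : ℝ :=
  (1 / (G.n : ℝ)) * ∑ i : Fin G.n, (G.deg i : ℝ)

/-- Square average degree `d²̄(G)`. -/
noncomputable def sqAvgDeg (G : FinGraph) : ℝ :=
  (1 / (G.n : ℝ)) * ∑ i : Fin G.n, (G.deg i : ℝ) ^ 2

/-- Edge density `ρ(G) = 2e(G)/v(G)²`. -/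
noncomputable def density (G : FinGraph) : ℝ :=
  2 * (G.e : ℝ) / (G.n : ℝ) ^ 2

end FinGraph

/-- Unlabeled finite graphs: isomorphism classes of finite graphs. -/
def UGraph := Quot FinGraph.Iso

/-- The isomorphism class of a finite graph. -/
def FinGraph.cls (G : FinGraph) : UGraph := Quot.mk _ G

/-- Probability that independent Bernoulli(min p 1) vertex selection picks exactly `S`. -/
noncomputable def sampleWeight (G : FinGraph) (p : ℝ) (S : Finset (Fin G.n)) : ℝ :=
  (min p 1) ^ S.card * (1 - min p 1) ^ (G.n - S.card)

/-- Law (pmf) of the `p`-sampling `S_p(G)`: keep each vertex independently with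
probability `min p 1`, take the induced subgraph, discard isolated vertices,
and pass to the isomorphism class. -/
noncomputable def pSampleLaw (G : FinGraph) (p : ℝ) : UGraph → ℝ := fun H =>
  ∑ S ∈ (univ : Finset (Fin G.n)).powerset,
    sampleWeight G p S * (if ((G.induce S).core).cls = H then 1 else 0)

/-- The graph on `Fin k` pulled back along a vertex sample `x`. -/
def seqGraph (G : FinGraph) (k : ℕ) (x : Fin k → Fin G.n) : FinGraph where
  n := k
  adj i j := G.adj (x i) (x j)
  symm i j := G.symm _ _

/-- Law (pmf) of the with-replacement `p`-sampling `S̃_p(G)`: draw `K ~ Poisson(p·v(G))`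
vertices uniformly with replacement, form the graph on `Fin K` in which `i, j` are joined
whenever `(x_i, x_j)` is an edge of `G`, discard isolated vertices, and pass to the
isomorphism class. -/
noncomputable def wrSampleLaw (G : FinGraph) (p : ℝ) : UGraph → ℝ := fun H =>
  ∑' k : ℕ,
    (Real.exp (-(p * (G.v : ℝ))) * (p * (G.v : ℝ)) ^ k / (Nat.factorial k : ℝ)) *
      ((((univ : Finset (Fin k → Fin G.n)).filter
          (fun x => ((seqGraph G k x).core).cls = H)).card : ℝ) / ((G.v : ℝ)) ^ k)

/-- Total variation distance `sup_A |P(A) − Q(A)|` between two pmf-style laws on a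
countable discrete space. -/
noncomputable def dTV {α : Type*} (f g : α → ℝ) : ℝ :=
  ⨆ A : Set α, |∑' x : A, (f x.1 - g x.1)|

/-- `∑_i d_i · 1[d_i > k·√(e(G))]`, the total degree of vertices of degree exceeding
`k·√(e(G))`. -/
noncomputable def tailDegSum (G : FinGraph) (k : ℝ) : ℝ :=
  ∑ i : Fin G.n,
    (if k * Real.sqrt (G.e : ℝ) < (G.deg i : ℝ) then (G.deg i : ℝ) else 0)

/-- A sequence of graphs is uniformly sampling regular. -/
def UniformlySamplingRegular (G : ℕ → FinGraph) : Prop :=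
  ∀ ε : ℝ, 0 < ε → ∃ k : ℝ, 0 < k ∧ ∀ j,
    (1 / ((G j).e : ℝ)) * tailDegSum (G j) k < ε

/-- `E[e(S_p(G)) · 1[e(S_p(G)) > M]]`, the tail expectation of the number of non-loop
edges of the `p`-sampled subgraph (discarding isolated vertices does not change it). -/
noncomputable def expEdgeTail (G : FinGraph) (p M : ℝ) : ℝ :=
  ∑ S ∈ (univ : Finset (Fin G.n)).powerset,
    sampleWeight G p S *
      (if M < ((G.induce S).e : ℝ) then ((G.induce S).e : ℝ) else 0)

/-- `E[e(S_p(G))]`, the expected number of non-loop edges of the `p`-sampled subgraph. -/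
noncomputable def expEdge (G : FinGraph) (p : ℝ) : ℝ :=
  ∑ S ∈ (univ : Finset (Fin G.n)).powerset,
    sampleWeight G p S * ((G.induce S).e : ℝ)

/-- Law (pmf on ℕ) of the number of non-loop edges of the `p`-sampled subgraph. -/
noncomputable def edgeLaw (G : FinGraph) (p : ℝ) (m : ℕ) : ℝ :=
  ∑ S ∈ (univ : Finset (Fin G.n)).powerset,
    sampleWeight G p S * (if (G.induce S).e = m then 1 else 0)

/-- Number of kept neighbours (via non-loop edges) of vertex `i` under the selection `S`. -/
def keptNbrCount (G : FinGraph) (S : Finset (Fin G.n)) (i : Fin G.n) : ℕ :=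
  ((univ : Finset (Fin G.n)).filter (fun j => G.adj i j = true ∧ j ≠ i ∧ j ∈ S)).card

/-- `Pr(D_i ≥ 2)`: the probability that vertex `i` is kept and has at least two kept
neighbours, under independent Bernoulli(min p 1) vertex selection. -/
noncomputable def probD2 (G : FinGraph) (p : ℝ) (i : Fin G.n) : ℝ :=
  ∑ S ∈ (univ : Finset (Fin G.n)).powerset,
    sampleWeight G p S * (if i ∈ S ∧ 2 ≤ keptNbrCount G S i then 1 else 0)

/-- Probability that some kept vertex has at least two kept neighbours. -/
noncomputable def probSomeD2 (G : FinGraph) (p : ℝ) : ℝ :=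
  ∑ S ∈ (univ : Finset (Fin G.n)).powerset,
    sampleWeight G p S * (if ∃ i ∈ S, 2 ≤ keptNbrCount G S i then 1 else 0)

/-- Number of isolated kept (non-loop) edges: both endpoints kept, and each endpoint has
exactly one kept neighbour. -/
def isoEdgeCount (G : FinGraph) (S : Finset (Fin G.n)) : ℕ :=
  ((univ : Finset (Fin G.n × Fin G.n)).filter (fun q =>
    G.adj q.1 q.2 = true ∧ q.1 < q.2 ∧ q.1 ∈ S ∧ q.2 ∈ S ∧
    keptNbrCount G S q.1 = 1 ∧ keptNbrCount G S q.2 = 1)).card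

/-!
Write `e^I = ∑_q I_q` over the non-loop edges `q`, with `I_q` the indicator that `q` is
isolated, so that `E[(e^I)²] = ∑_{q,q'} P(I_q ∧ I_q')`. For `q = q'` this is at most the
probability `p²` that both endpoints are kept. Two distinct edges sharing a vertex are never
both isolated, since the shared vertex would have two kept neighbours; for vertex-disjoint
edges the term is at most the probability `p⁴` that all four endpoints are kept. Summing gives
`e²·p⁴ + e·p²`, which equals `r⁴/4 + r²/2` at `p = r/√(2e)`.
-/

namespace FinGraph

variable (G : FinGraph)

def edgePairs : Finset (Fin G.n × Fin G.n) :=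
  univ.filter (fun q => G.adj q.1 q.2 = true ∧ q.1 < q.2)

def keptNbrs (S : Finset (Fin G.n)) (i : Fin G.n) : Finset (Fin G.n) :=
  univ.filter (fun j => G.adj i j = true ∧ j ≠ i ∧ j ∈ S)

def IsIsolatedEdge (S : Finset (Fin G.n)) (q : Fin G.n × Fin G.n) : Prop :=
  q.1 ∈ S ∧ q.2 ∈ S ∧ keptNbrCount G S q.1 = 1 ∧ keptNbrCount G S q.2 = 1

noncomputable def sampleMean (p : ℝ) (f : Finset (Fin G.n) → ℝ) : ℝ :=
  ∑ S ∈ (univ : Finset (Fin G.n)).powerset, sampleWeight G p S * f S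

variable {G}

lemma sampleWeight_nonneg {p : ℝ} (hp : 0 ≤ p) (S : Finset (Fin G.n)) :
    0 ≤ sampleWeight G p S :=
  mul_nonneg (pow_nonneg (le_min hp zero_le_one) _)
    (pow_nonneg (sub_nonneg.mpr (min_le_right p 1)) _)

lemma sampleMean_sum {ι : Type*} (p : ℝ) (s : Finset ι) (f : ι → Finset (Fin G.n) → ℝ) :
    G.sampleMean p (fun S => ∑ i ∈ s, f i S) = ∑ i ∈ s, G.sampleMean p (f i) := by
  simp only [sampleMean, mul_sum]
  exact sum_comm

lemma sampleMean_mono {p : ℝ} (hp : 0 ≤ p) {f g : Finset (Fin G.n) → ℝ} (hfg : ∀ S, f S ≤ g S) :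
    G.sampleMean p f ≤ G.sampleMean p g :=
  sum_le_sum fun S _ => mul_le_mul_of_nonneg_left (hfg S) (sampleWeight_nonneg hp S)

lemma sampleMean_zero (p : ℝ) : G.sampleMean p (fun _ => 0) = 0 := by
  simp [sampleMean]

lemma sampleMean_subset (p : ℝ) (T : Finset (Fin G.n)) :
    G.sampleMean p (fun S => if T ⊆ S then 1 else 0) = (min p 1) ^ T.card := by
  -- expand `∏ i, (m + [i ∉ T] (1 - m)) = m ^ #T` over the subsets of the vertex set
  set m := min p 1
  have hterm : ∀ S ∈ (univ : Finset (Fin G.n)).powerset,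
      sampleWeight G p S * (if T ⊆ S then 1 else 0) =
        (∏ _i ∈ S, m) * ∏ i ∈ univ \ S, (if i ∈ T then 0 else 1 - m) := by
    intro S _
    by_cases hTS : T ⊆ S
    · have hout : ∀ i ∈ univ \ S, (if i ∈ T then (0 : ℝ) else 1 - m) = 1 - m :=
        fun i hi => if_neg fun hiT => (mem_sdiff.mp hi).2 (hTS hiT)
      rw [prod_congr rfl hout, prod_const, prod_const, if_pos hTS, mul_one,
        card_sdiff_of_subset (subset_univ S), card_univ, Fintype.card_fin]
      rfl
    · obtain ⟨i, hiT, hiS⟩ := not_subset.mp hTS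
      have hzero : ∏ j ∈ univ \ S, (if j ∈ T then (0 : ℝ) else 1 - m) = 0 :=
        Finset.prod_eq_zero (mem_sdiff.mpr ⟨mem_univ i, hiS⟩) (if_pos hiT)
      rw [if_neg hTS, mul_zero, hzero, mul_zero]
  have hfactor : ∀ i ∈ (univ : Finset (Fin G.n)),
      (m + if i ∈ T then 0 else 1 - m) = if i ∈ T then m else 1 := by
    intro i _
    split_ifs <;> ring
  rw [sampleMean, sum_congr rfl hterm, ← prod_add, prod_congr rfl hfactor, prod_ite_mem,
    univ_inter, prod_const]

lemma keptNbrs_eq_singleton {S : Finset (Fin G.n)} {v w : Fin G.n} (hadj : G.adj v w = true)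
    (hwv : w ≠ v) (hw : w ∈ S) (h : keptNbrCount G S v = 1) : G.keptNbrs S v = {w} := by
  obtain ⟨c, hc⟩ := Finset.card_eq_one.mp h
  have hwc : w ∈ ({c} : Finset (Fin G.n)) := hc ▸ mem_filter.mpr ⟨mem_univ w, hadj, hwv, hw⟩
  rw [keptNbrs, hc, mem_singleton.mp hwc]

lemma IsIsolatedEdge.keptNbrs_eq {S : Finset (Fin G.n)} {q : Fin G.n × Fin G.n}
    (hq : q ∈ G.edgePairs) (h : G.IsIsolatedEdge S q) :
    G.keptNbrs S q.1 = {q.2} ∧ G.keptNbrs S q.2 = {q.1} := by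
  obtain ⟨hadj, hlt⟩ := (mem_filter.mp hq).2
  exact ⟨keptNbrs_eq_singleton hadj hlt.ne' h.2.1 h.2.2.1,
    keptNbrs_eq_singleton (G.symm _ _ ▸ hadj) hlt.ne h.1 h.2.2.2⟩

lemma IsIsolatedEdge.eq_or_disjoint {S : Finset (Fin G.n)} {q q' : Fin G.n × Fin G.n}
    (hq : q ∈ G.edgePairs) (hq' : q' ∈ G.edgePairs)
    (h : G.IsIsolatedEdge S q) (h' : G.IsIsolatedEdge S q') :
    q = q' ∨ (q.1 ≠ q'.1 ∧ q.1 ≠ q'.2 ∧ q.2 ≠ q'.1 ∧ q.2 ≠ q'.2) := by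
  obtain ⟨h1, h2⟩ := h.keptNbrs_eq hq
  obtain ⟨h1', h2'⟩ := h'.keptNbrs_eq hq'
  have hlt := (mem_filter.mp hq).2.2
  have hlt' := (mem_filter.mp hq').2.2
  by_contra! hne
  -- a shared endpoint `v` forces `{other end of q} = keptNbrs S v = {other end of q'}`
  obtain ⟨a, b⟩ := q
  obtain ⟨a', b'⟩ := q'
  simp only [ne_eq, Prod.mk.injEq] at *
  grind [Finset.singleton_inj]

lemma isoEdgeCount_eq_sum (S : Finset (Fin G.n)) :
    (isoEdgeCount G S : ℝ) = ∑ q ∈ G.edgePairs, if G.IsIsolatedEdge S q then 1 else 0 := by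
  rw [← natCast_card_filter, edgePairs, filter_filter, isoEdgeCount]
  simp only [IsIsolatedEdge, and_assoc]

lemma sampleMean_indicator_mono {p : ℝ} (hp : 0 ≤ p) {P Q : Finset (Fin G.n) → Prop}
    [DecidablePred P] [DecidablePred Q] (hPQ : ∀ S, P S → Q S) :
    G.sampleMean p (fun S => if P S then 1 else 0) ≤
      G.sampleMean p (fun S => if Q S then 1 else 0) :=
  sampleMean_mono hp fun S => by
    by_cases hP : P S
    · simp [hP, hPQ S hP]
    · simp only [hP, if_false]
      split_ifs <;> norm_num

lemma sampleMean_isolated_mul_isolated_le {p : ℝ} (hp0 : 0 ≤ p) (hp1 : p ≤ 1)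
    {q q' : Fin G.n × Fin G.n} (hq : q ∈ G.edgePairs) (hq' : q' ∈ G.edgePairs) :
    G.sampleMean p (fun S => (if G.IsIsolatedEdge S q then 1 else 0) *
        (if G.IsIsolatedEdge S q' then 1 else 0)) ≤ p ^ 4 + if q = q' then p ^ 2 else 0 := by
  simp only [ite_zero_mul_ite_zero, mul_one]
  have hmin : min p 1 = p := min_eq_left hp1
  have hlt := (mem_filter.mp hq).2.2
  by_cases hqq : q = q'
  · subst hqq
    calc _ ≤ G.sampleMean p (fun S => if {q.1, q.2} ⊆ S then 1 else 0) :=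
          sampleMean_indicator_mono hp0 fun S h =>
            insert_subset_iff.mpr ⟨h.1.1, singleton_subset_iff.mpr h.1.2.1⟩
      _ = p ^ 2 := by rw [sampleMean_subset, card_pair hlt.ne, hmin]
      _ ≤ _ := by rw [if_pos rfl]; nlinarith [pow_nonneg hp0 4]
  rw [if_neg hqq, add_zero]
  by_cases hdisj : q.1 ≠ q'.1 ∧ q.1 ≠ q'.2 ∧ q.2 ≠ q'.1 ∧ q.2 ≠ q'.2
  · have hlt' := (mem_filter.mp hq').2.2
    obtain ⟨d11, d12, d21, d22⟩ := hdisj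
    have hcard : ({q.1, q.2, q'.1, q'.2} : Finset (Fin G.n)).card = 4 := by
      rw [card_insert_of_notMem (by simp [hlt.ne, d11, d12]),
        card_insert_of_notMem (by simp [d21, d22]),
        card_insert_of_notMem (by simp [hlt'.ne]), card_singleton]
    calc _ ≤ G.sampleMean p (fun S => if {q.1, q.2, q'.1, q'.2} ⊆ S then 1 else 0) :=
          sampleMean_indicator_mono hp0 fun S h => by
            simp only [insert_subset_iff, singleton_subset_iff]
            exact ⟨h.1.1, h.1.2.1, h.2.1, h.2.2.1⟩
      _ = p ^ 4 := by rw [sampleMean_subset, hcard, hmin]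
  · have hnever : ∀ S, ¬(G.IsIsolatedEdge S q ∧ G.IsIsolatedEdge S q') := fun S h =>
      (IsIsolatedEdge.eq_or_disjoint hq hq' h.1 h.2).elim hqq hdisj
    simp only [hnever, if_false, sampleMean_zero]
    positivity

lemma sampleMean_isoEdgeCount_sq_le {p : ℝ} (hp0 : 0 ≤ p) (hp1 : p ≤ 1) :
    G.sampleMean p (fun S => (isoEdgeCount G S : ℝ) ^ 2) ≤
      (G.e : ℝ) ^ 2 * p ^ 4 + (G.e : ℝ) * p ^ 2 := by
  have he : G.e = G.edgePairs.card := rfl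
  calc _ = ∑ q ∈ G.edgePairs, ∑ q' ∈ G.edgePairs,
        G.sampleMean p (fun S => (if G.IsIsolatedEdge S q then 1 else 0) *
          (if G.IsIsolatedEdge S q' then 1 else 0)) := by
        simp only [isoEdgeCount_eq_sum, sq, sum_mul_sum, sampleMean_sum]
    _ ≤ ∑ q ∈ G.edgePairs, ∑ q' ∈ G.edgePairs, (p ^ 4 + if q = q' then p ^ 2 else 0) :=
        sum_le_sum fun q hq => sum_le_sum fun q' hq' =>
          sampleMean_isolated_mul_isolated_le hp0 hp1 hq hq'
    _ = _ := by
        simp only [sum_add_distrib, sum_ite_eq, sum_ite_mem, inter_self, sum_const,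
          nsmul_eq_mul, he]
        ring

end FinGraph

lemma sq_mul_pow_four_add_mul_sq_le {x p r : ℝ} (hx : 0 ≤ x) (hp : p = r / √(2 * x)) :
    x ^ 2 * p ^ 4 + x * p ^ 2 ≤ r ^ 4 / 4 + r ^ 2 / 2 := by
  rcases hx.eq_or_lt with rfl | hx
  · simp only [ne_eq, OfNat.ofNat_ne_zero, not_false_eq_true, zero_pow, zero_mul, add_zero]
    positivity
  · have hp2 : p ^ 2 = r ^ 2 / (2 * x) := by rw [hp, div_pow, Real.sq_sqrt (by positivity)]
    apply le_of_eq
    calc x ^ 2 * p ^ 4 + x * p ^ 2 = x ^ 2 * (p ^ 2) ^ 2 + x * p ^ 2 := by ring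
      _ = _ := by rw [hp2]; field_simp; ring

/-- Keep each vertex of `G` independently with probability `p`, and let
`e^I` be the number of isolated kept edges (both endpoints kept, each endpoint with
exactly one kept neighbour). Then `E[(e^I)²] ≤ e²·p⁴ + e·p²`; in particular with
`p = r/√(2e) ≤ 1` one gets `E[(e^I)²] ≤ r⁴/4 + r²/2`, a bound independent of `G`. -/
theorem stmt8 (G : FinGraph) (p : ℝ) (hp0 : 0 ≤ p) (hp1 : p ≤ 1) :
    ((∑ S ∈ (univ : Finset (Fin G.n)).powerset,
        sampleWeight G p S * (isoEdgeCount G S : ℝ) ^ 2) ≤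
      (G.e : ℝ) ^ 2 * p ^ 4 + (G.e : ℝ) * p ^ 2) ∧
    ∀ r : ℝ, 0 ≤ r → p = r / Real.sqrt (2 * (G.e : ℝ)) →
      (∑ S ∈ (univ : Finset (Fin G.n)).powerset,
          sampleWeight G p S * (isoEdgeCount G S : ℝ) ^ 2) ≤
        r ^ 4 / 4 + r ^ 2 / 2 := by
  have hmain := FinGraph.sampleMean_isoEdgeCount_sq_le (G := G) hp0 hp1
  exact ⟨hmain, fun r _ hp =>
    hmain.trans (sq_mul_pow_four_add_mul_sq_le (Nat.cast_nonneg _) hp)⟩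
end

section
/- Let (G_j) be a sequence of finite loopless graphs with e(G_j) → ∞ satisfying (d²̄(G_j)/d̄(G_j)²)·√(ρ(G_j)) → 0 as j → ∞ (this holds, in particular, if the maximal degree of G_j is o(√(e(G_j)))). Fix r > 0 and set p_j = r/√(2e(G_j)). Let N_j be the number of vertices of degree at least 2 in the p_j-sampled subgraph S_{p_j}(G_j). Then E[N_j] ≤ r³·(d²̄(G_j)/d̄(G_j)²)·√(ρ(G_j)) → 0, and hence N_j → 0 in probability; i.e., with probability tending to 1, every vertex of S_{p_j}(G_j) has degree at most 1. -/
open Filter Finset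
open scoped Classical ENNReal

/-! A kept vertex `i` with two kept neighbours means that `i` together with some ordered pair
of distinct neighbours `(a, b)` is kept. Each such triple survives with probability `p³`, and
there are at most `d_i²` of them, so the union bound gives
`E[N] ≤ p³ ∑ d_i² = r³ ∑ d_i² / (2e)^{3/2}`, which is exactly `r³ (d²̄/d̄²) √ρ` since
`d̄ = 2e/v`. A second union bound over the vertices gives `P(N ≥ 1) ≤ E[N]`. -/

/-- `E[f(S)]` for the random vertex selection `S` underlying the `p`-sampling. -/
noncomputable def sampleExpect (G : FinGraph) (p : ℝ) (f : Finset (Fin G.n) → ℝ) : ℝ :=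
  ∑ S ∈ (univ : Finset (Fin G.n)).powerset, sampleWeight G p S * f S

def FinGraph.nbrs (G : FinGraph) (i : Fin G.n) : Finset (Fin G.n) :=
  (univ : Finset (Fin G.n)).filter (fun j => G.adj i j = true ∧ j ≠ i)

theorem ite_exists_le_sum_ite {ι : Type*} (s : Finset ι) (P : ι → Prop) [DecidablePred P] :
    (if ∃ x ∈ s, P x then (1 : ℝ) else 0) ≤ ∑ x ∈ s, if P x then (1 : ℝ) else 0 := by
  rw [Finset.sum_boole]
  split_ifs with h
  · obtain ⟨x, hxs, hx⟩ := h
    exact_mod_cast Finset.card_pos.mpr ⟨x, Finset.mem_filter.mpr ⟨hxs, hx⟩⟩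
  · positivity

theorem sum_powerset_pow_mul_ite_subset {α : Type*} [Fintype α] [DecidableEq α] (q : ℝ)
    (T : Finset α) :
    ∑ S ∈ (univ : Finset α).powerset,
      q ^ S.card * (1 - q) ^ (Fintype.card α - S.card) * (if T ⊆ S then 1 else 0)
      = q ^ T.card := by
  have hterm : ∀ S ∈ (univ : Finset α).powerset,
      q ^ S.card * (1 - q) ^ (Fintype.card α - S.card) * (if T ⊆ S then 1 else 0)
        = (∏ _i ∈ S, q) * ∏ i ∈ univ \ S, if i ∈ T then 0 else 1 - q := by
    intro S _
    by_cases hTS : T ⊆ S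
    · have hout : ∀ i ∈ univ \ S, i ∉ T := fun i hi hiT => (Finset.mem_sdiff.mp hi).2 (hTS hiT)
      rw [if_pos hTS, Finset.prod_congr rfl fun i hi => if_neg (hout i hi), Finset.prod_const,
        Finset.prod_const, Finset.card_univ_sdiff, mul_one]
    · obtain ⟨t, htT, htS⟩ := Finset.not_subset.mp hTS
      have hzero : ∏ i ∈ univ \ S, (if i ∈ T then (0 : ℝ) else 1 - q) = 0 :=
        Finset.prod_eq_zero (Finset.mem_sdiff.mpr ⟨mem_univ t, htS⟩) (if_pos htT)
      rw [if_neg hTS, mul_zero, hzero, mul_zero]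
  rw [Finset.sum_congr rfl hterm, ← Finset.prod_add]
  calc ∏ i, (q + if i ∈ T then 0 else 1 - q) = ∏ i, if i ∈ T then q else 1 :=
        Finset.prod_congr rfl fun i _ => by split_ifs <;> ring
    _ = q ^ T.card := by rw [Finset.prod_ite_mem, Finset.univ_inter, Finset.prod_const]

section sampleExpect

variable {G : FinGraph} {p : ℝ}

theorem sampleWeight_nonneg (hp : 0 ≤ p) (S : Finset (Fin G.n)) : 0 ≤ sampleWeight G p S := by
  have hq : 0 ≤ min p 1 := le_min hp zero_le_one
  have hq' : 0 ≤ 1 - min p 1 := sub_nonneg.mpr (min_le_right p 1)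
  unfold sampleWeight
  positivity

theorem sampleExpect_mono (hp : 0 ≤ p) {f g : Finset (Fin G.n) → ℝ} (hfg : ∀ S, f S ≤ g S) :
    sampleExpect G p f ≤ sampleExpect G p g :=
  Finset.sum_le_sum fun S _ => mul_le_mul_of_nonneg_left (hfg S) (sampleWeight_nonneg hp S)

theorem sampleExpect_nonneg (hp : 0 ≤ p) {f : Finset (Fin G.n) → ℝ} (hf : ∀ S, 0 ≤ f S) :
    0 ≤ sampleExpect G p f :=
  Finset.sum_nonneg fun S _ => mul_nonneg (sampleWeight_nonneg hp S) (hf S)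

theorem sampleExpect_sum {ι : Type*} (s : Finset ι) (f : ι → Finset (Fin G.n) → ℝ) :
    sampleExpect G p (fun S => ∑ x ∈ s, f x S) = ∑ x ∈ s, sampleExpect G p (f x) := by
  simp only [sampleExpect, Finset.mul_sum]
  exact Finset.sum_comm

theorem sampleExpect_ite_subset (T : Finset (Fin G.n)) :
    sampleExpect G p (fun S => if T ⊆ S then 1 else 0) = (min p 1) ^ T.card := by
  simpa [sampleExpect, sampleWeight, mul_assoc] using
    sum_powerset_pow_mul_ite_subset (min p 1) T

end sampleExpect

theorem probD2_le (G : FinGraph) {p : ℝ} (hp : 0 ≤ p) (i : Fin G.n) :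
    probD2 G p i ≤ (min p 1) ^ 3 * (G.deg i : ℝ) ^ 2 := by
  set N := G.nbrs i
  have hcover : ∀ S : Finset (Fin G.n), (if i ∈ S ∧ 2 ≤ keptNbrCount G S i then (1 : ℝ) else 0)
      ≤ ∑ z ∈ N.offDiag, if insert i {z.1, z.2} ⊆ S then 1 else 0 := by
    intro S
    refine le_trans ?_ (ite_exists_le_sum_ite _ _)
    split_ifs with hD hex <;> try norm_num
    obtain ⟨hiS, hcnt⟩ := hD
    obtain ⟨a, ha, b, hb, hab⟩ := Finset.one_lt_card.mp hcnt
    simp only [Finset.mem_filter, Finset.mem_univ, true_and] at ha hb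
    refine hex ⟨(a, b), ?_, ?_⟩
    · simp [N, FinGraph.nbrs, ha.1, ha.2.1, hb.1, hb.2.1, hab]
    · simp [Finset.insert_subset_iff, hiS, ha.2.2, hb.2.2]
  have htriple : ∀ z ∈ N.offDiag, (insert i {z.1, z.2} : Finset (Fin G.n)).card = 3 := by
    intro z hz
    simp only [Finset.mem_offDiag, N, FinGraph.nbrs, Finset.mem_filter, Finset.mem_univ,
      true_and] at hz
    exact Finset.card_eq_three.mpr ⟨i, z.1, z.2, hz.1.2.symm, hz.2.1.2.symm, hz.2.2, rfl⟩
  have hpairs : (N.offDiag.card : ℝ) ≤ (G.deg i : ℝ) ^ 2 := by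
    have : N.offDiag.card ≤ G.deg i ^ 2 := by
      rw [Finset.offDiag_card, sq]
      exact Nat.sub_le _ _
    exact_mod_cast this
  calc probD2 G p i
      ≤ sampleExpect G p (fun S => ∑ z ∈ N.offDiag, if insert i {z.1, z.2} ⊆ S then 1 else 0) :=
        sampleExpect_mono hp hcover
    _ = ∑ _z ∈ N.offDiag, (min p 1) ^ 3 := by
        rw [sampleExpect_sum]
        exact Finset.sum_congr rfl fun z hz => by rw [sampleExpect_ite_subset, htriple z hz]
    _ ≤ (min p 1) ^ 3 * (G.deg i : ℝ) ^ 2 := by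
        rw [Finset.sum_const, nsmul_eq_mul, mul_comm]
        exact mul_le_mul_of_nonneg_left hpairs (pow_nonneg (le_min hp zero_le_one) 3)

theorem probSomeD2_le_sum_probD2 (G : FinGraph) {p : ℝ} (hp : 0 ≤ p) :
    probSomeD2 G p ≤ ∑ i : Fin G.n, probD2 G p i := by
  calc probSomeD2 G p
      ≤ sampleExpect G p (fun S => ∑ i, if i ∈ S ∧ 2 ≤ keptNbrCount G S i then 1 else 0) :=
        sampleExpect_mono hp fun S => by
          simpa only [Finset.mem_univ, true_and] using
            ite_exists_le_sum_ite univ fun i => i ∈ S ∧ 2 ≤ keptNbrCount G S i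
    _ = ∑ i : Fin G.n, probD2 G p i := sampleExpect_sum _ _

theorem FinGraph.sum_deg_eq_two_mul_e (G : FinGraph) : ∑ i, G.deg i = 2 * G.e := by
  have hsplit : ∀ i j : Fin G.n, (if G.adj i j = true ∧ j ≠ i then 1 else 0) =
      (if G.adj i j = true ∧ i < j then 1 else 0) +
        (if G.adj j i = true ∧ j < i then 1 else 0) := by
    intro i j
    rw [G.symm j i]
    rcases lt_trichotomy i j with h | rfl | h <;> grind
  simp only [FinGraph.deg, FinGraph.e, Finset.card_filter, Fintype.sum_prod_type, hsplit,
    Finset.sum_add_distrib]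
  rw [Finset.sum_comm (f := fun i j => if G.adj j i = true ∧ j < i then 1 else 0), two_mul]

theorem FinGraph.sqAvgDeg_div_avgDeg_sq_mul_sqrt_density (G : FinGraph) :
    G.sqAvgDeg / G.avgDeg ^ 2 * Real.sqrt G.density =
      (∑ i, (G.deg i : ℝ) ^ 2) / Real.sqrt (2 * G.e) ^ 3 := by
  rcases Nat.eq_zero_or_pos G.e with he | he
  · have hdeg : ∀ i, G.deg i = 0 := fun i =>
      Finset.sum_eq_zero_iff.mp (by rw [G.sum_deg_eq_two_mul_e, he, mul_zero]) i (mem_univ i)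
    simp [FinGraph.sqAvgDeg, hdeg]
  · obtain ⟨⟨i, _⟩, _⟩ := Finset.card_pos.mp he
    have hn : (0 : ℝ) < G.n := by exact_mod_cast i.pos
    have hsum : ∑ i, (G.deg i : ℝ) = 2 * G.e := by exact_mod_cast G.sum_deg_eq_two_mul_e
    have he' : (0 : ℝ) < 2 * G.e := by positivity
    have hs : Real.sqrt (2 * G.e) ^ 2 = 2 * G.e := Real.sq_sqrt he'.le
    rw [FinGraph.sqAvgDeg, FinGraph.avgDeg, FinGraph.density, hsum, Real.sqrt_div he'.le,
      Real.sqrt_sq hn.le, ← hs]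
    field_simp
    rw [hs]

theorem sum_probD2_le (G : FinGraph) {r : ℝ} (hr : 0 ≤ r) :
    ∑ i, probD2 G (r / Real.sqrt (2 * G.e)) i ≤
      r ^ 3 * (G.sqAvgDeg / G.avgDeg ^ 2 * Real.sqrt G.density) := by
  set s := Real.sqrt (2 * G.e)
  have hp : 0 ≤ r / s := by positivity
  have hq : min (r / s) 1 ^ 3 ≤ (r / s) ^ 3 :=
    pow_le_pow_left₀ (le_min hp zero_le_one) (min_le_left _ _) 3
  calc ∑ i, probD2 G (r / s) i
      ≤ ∑ i, min (r / s) 1 ^ 3 * (G.deg i : ℝ) ^ 2 :=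
        Finset.sum_le_sum fun i _ => probD2_le G hp i
    _ = min (r / s) 1 ^ 3 * ∑ i, (G.deg i : ℝ) ^ 2 := (Finset.mul_sum _ _ _).symm
    _ ≤ (r / s) ^ 3 * ∑ i, (G.deg i : ℝ) ^ 2 := by gcongr
    _ = r ^ 3 * (G.sqAvgDeg / G.avgDeg ^ 2 * Real.sqrt G.density) := by
        rw [G.sqAvgDeg_div_avgDeg_sq_mul_sqrt_density]
        ring

theorem stmt11_general (G : ℕ → FinGraph)
    (hratio : Tendsto
      (fun j => ((G j).sqAvgDeg / (G j).avgDeg ^ 2) * Real.sqrt ((G j).density))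
      atTop (nhds 0))
    (r : ℝ) (hr : 0 < r) :
    (∀ j, (∑ i : Fin (G j).n, probD2 (G j) (r / Real.sqrt (2 * ((G j).e : ℝ))) i) ≤
        r ^ 3 * (((G j).sqAvgDeg / (G j).avgDeg ^ 2) * Real.sqrt ((G j).density))) ∧
    Tendsto
        (fun j => ∑ i : Fin (G j).n, probD2 (G j) (r / Real.sqrt (2 * ((G j).e : ℝ))) i)
        atTop (nhds 0) ∧
    Tendsto (fun j => probSomeD2 (G j) (r / Real.sqrt (2 * ((G j).e : ℝ))))
        atTop (nhds 0) := by
  have hp : ∀ j, 0 ≤ r / Real.sqrt (2 * ((G j).e : ℝ)) := fun j => by positivity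
  have hbound := fun j => sum_probD2_le (G j) hr.le
  have hlim : Tendsto
      (fun j => r ^ 3 * (((G j).sqAvgDeg / (G j).avgDeg ^ 2) * Real.sqrt ((G j).density)))
      atTop (nhds 0) := by
    simpa using hratio.const_mul (r ^ 3)
  refine ⟨hbound, squeeze_zero (fun j => ?_) hbound hlim,
    squeeze_zero (fun j => ?_) (fun j => (probSomeD2_le_sum_probD2 _ (hp j)).trans (hbound j))
      hlim⟩
  · exact Finset.sum_nonneg fun i _ => sampleExpect_nonneg (hp j) fun _ => by positivity
  · exact sampleExpect_nonneg (hp j) fun _ => by positivity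

/-- For loopless graphs with `e(G_j) → ∞` and
`(d²̄(G_j)/d̄(G_j)²)·√(ρ(G_j)) → 0`, with `p_j = r/√(2e(G_j))`, the expected number `N_j`
of vertices of degree at least `2` in the `p_j`-sampled subgraph satisfies
`E[N_j] ≤ r³·(d²̄(G_j)/d̄(G_j)²)·√(ρ(G_j)) → 0`, hence `N_j → 0` in probability, i.e.,
with probability tending to one every vertex of the sampled subgraph has degree at most
one. -/
theorem stmt11 (G : ℕ → FinGraph) (hloop : ∀ j, (G j).Loopless)
    (he : Tendsto (fun j => ((G j).e : ℝ)) atTop atTop)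
    (hratio : Tendsto
      (fun j => ((G j).sqAvgDeg / (G j).avgDeg ^ 2) * Real.sqrt ((G j).density))
      atTop (nhds 0))
    (r : ℝ) (hr : 0 < r) :
    (∀ j, (∑ i : Fin (G j).n, probD2 (G j) (r / Real.sqrt (2 * ((G j).e : ℝ))) i) ≤
        r ^ 3 * (((G j).sqAvgDeg / (G j).avgDeg ^ 2) * Real.sqrt ((G j).density))) ∧
    Tendsto
        (fun j => ∑ i : Fin (G j).n, probD2 (G j) (r / Real.sqrt (2 * ((G j).e : ℝ))) i)
        atTop (nhds 0) ∧
    Tendsto (fun j => probSomeD2 (G j) (r / Real.sqrt (2 * ((G j).e : ℝ))))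
        atTop (nhds 0) :=
  stmt11_general G hratio r hr
end
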